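/- The forward shift S is bounded on the little Hardy space H^p_0(T) if and only if the set {K(1,n-1)·γ(n-1)/γ(n) : n ∈ ℕ} is bounded, and in that case ‖S‖ = (sup_n K(1,n-1)·γ(n-1)/γ(n))^{1/p}. -/

import Mathlib

open scoped BigOperators
open Classical

/-- An infinite, locally finite rooted tree, presented combinatorially via a
parent function and a level (distance-to-root) function.  Every level is a
finite nonempty set of vertices. -/
structure HTree where
  V : Type
  root : V
  parent : V → V
  level : V → ℕ
  level_root : level root = 0
  root_of_level_zero : ∀ v, level v = 0 → v = root
  level_parent : ∀ v, v ≠ root → level (parent v) + 1 = level v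
  finite_level : ∀ n : ℕ, {v : V | level v = n}.Finite
  nonempty_level : ∀ n : ℕ, {v : V | level v = n}.Nonempty

namespace HTree

variable (T : HTree)

/-- The finite set of vertices at level `n`. -/
noncomputable def levelFinset (n : ℕ) : Finset T.V := (T.finite_level n).toFinset

/-- `γ(n)`, the number of vertices at level `n`. -/
noncomputable def gamma (n : ℕ) : ℕ := (T.levelFinset n).card

/-- The set of `m`-children of a vertex `v`. -/
noncomputable def nChildrenFinset (m : ℕ) (v : T.V) : Finset T.V :=
  (T.levelFinset (T.level v + m)).filter (fun w => T.parent^[m] w = v)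

/-- `γ(m,v)`, the number of `m`-children of `v`. -/
noncomputable def numNChildren (m : ℕ) (v : T.V) : ℕ := (T.nChildrenFinset m v).card

/-- The set of children of a vertex. -/
noncomputable def childrenFinset (v : T.V) : Finset T.V := T.nChildrenFinset 1 v

/-- `γ(1,v)`, the number of children of `v`. -/
noncomputable def numChildren (v : T.V) : ℕ := T.numNChildren 1 v

/-- `K(m,r)`, the maximal number of `m`-children among vertices at level `r`. -/
noncomputable def K (m r : ℕ) : ℕ := (T.levelFinset r).sup (fun v => T.numNChildren m v)

/-- `M_p^p(n,f)`, the `p`-th power of the `p`-th mean of `|f|` over level `n`. -/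
noncomputable def Mpp (p : ℝ) (f : T.V → ℂ) (n : ℕ) : ℝ :=
  (1 / (T.gamma n : ℝ)) * ∑ v ∈ T.levelFinset n, ‖f v‖ ^ p

/-- `M_p(n,f)`, the `p`-th mean of `|f|` over level `n`. -/
noncomputable def Mp (p : ℝ) (f : T.V → ℂ) (n : ℕ) : ℝ := (T.Mpp p f n) ^ (1 / p)

/-- Membership in the Hardy space `H^p(T)`. -/
def MemHp (p : ℝ) (f : T.V → ℂ) : Prop := ∃ C : ℝ, ∀ n : ℕ, T.Mp p f n ≤ C

/-- Membership in the little Hardy space `H^p_0(T)`. -/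
def MemHp0 (p : ℝ) (f : T.V → ℂ) : Prop :=
  Filter.Tendsto (T.Mp p f) Filter.atTop (nhds 0)

/-- The `H^p` norm, `sup_n M_p(n,f)`. -/
noncomputable def Hnorm (p : ℝ) (f : T.V → ℂ) : ℝ := ⨆ n : ℕ, T.Mp p f n

/-- The forward shift `(Sf)(v) = f(parent v)`, `(Sf)(root) = 0`. -/
noncomputable def S (f : T.V → ℂ) : T.V → ℂ := fun v => if v = T.root then 0 else f (T.parent v)

/-- The backward shift `(Bf)(v) = Σ_{w child of v} f(w)`. -/
noncomputable def B (f : T.V → ℂ) : T.V → ℂ := fun v => ∑ w ∈ T.childrenFinset v, f w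

/-- An operator `A` is bounded on the subspace described by `Mem`, with the
`H^p` norm. -/
def BoundedOn (A : (T.V → ℂ) → (T.V → ℂ)) (Mem : (T.V → ℂ) → Prop) (p : ℝ) : Prop :=
  ∃ C : ℝ, 0 ≤ C ∧ ∀ f, Mem f → Mem (A f) ∧ T.Hnorm p (A f) ≤ C * T.Hnorm p f

/-- The operator norm of `A` on the subspace described by `Mem`. -/
noncomputable def opNorm (A : (T.V → ℂ) → (T.V → ℂ)) (Mem : (T.V → ℂ) → Prop) (p : ℝ) : ℝ :=
  sInf {C : ℝ | 0 ≤ C ∧ ∀ f, Mem f → Mem (A f) ∧ T.Hnorm p (A f) ≤ C * T.Hnorm p f}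

/-- Hypercyclicity of an operator `A` on the subspace described by `Mem`. -/
def Hypercyclic (A : (T.V → ℂ) → (T.V → ℂ)) (Mem : (T.V → ℂ) → Prop) (p : ℝ) : Prop :=
  ∃ f, Mem f ∧ ∀ g, Mem g → ∀ ε : ℝ, 0 < ε →
    ∃ N : ℕ, T.Hnorm p (fun v => A^[N] f v - g v) < ε

end HTree

/-!
The forward shift copies the value at a vertex `v` of level `n` onto the `γ(1,v) ≤ K(1,n)`
children of `v`, so `M_p^p(n+1, Sf) = γ(n+1)⁻¹ ∑_{|v|=n} γ(1,v) |f(v)|^p` is at most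
`K(1,n) γ(n) / γ(n+1) · M_p^p(n, f)`. The indicator of a vertex of level `n` with `K(1,n)`
children shows that no smaller constant works at level `n`, so `C` bounds `S` on `H^p_0(T)`
exactly when `K(1,n) γ(n) / γ(n+1) ≤ C^p` for every `n`.
-/

lemma isLeast_rpow_ciSup {ι : Type*} [Nonempty ι] {c : ι → ℝ} (hc : 0 ≤ c)
    (hb : BddAbove (Set.range c)) {p : ℝ} (hp : 0 < p) :
    IsLeast {C : ℝ | 0 ≤ C ∧ ∀ i, c i ≤ C ^ p} ((⨆ i, c i) ^ (1 / p)) := by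
  have hL : 0 ≤ ⨆ i, c i := (hc (Classical.arbitrary ι)).trans (le_ciSup hb _)
  refine ⟨⟨by positivity, fun i => ?_⟩, fun C ⟨hC, hcC⟩ => ?_⟩
  · rw [one_div, Real.rpow_inv_rpow hL hp.ne']
    exact le_ciSup hb i
  · rw [one_div, Real.rpow_inv_le_iff_of_pos hL hC hp]
    exact ciSup_le hcC

namespace HTree

variable {T : HTree} {p : ℝ}

noncomputable def shiftRatio (T : HTree) (n : ℕ) : ℝ :=
  (T.K 1 n : ℝ) * (T.gamma n : ℝ) / (T.gamma (n + 1) : ℝ)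

def IsOpBound (T : HTree) (A : (T.V → ℂ) → (T.V → ℂ)) (Mem : (T.V → ℂ) → Prop) (p C : ℝ) :
    Prop :=
  0 ≤ C ∧ ∀ f, Mem f → Mem (A f) ∧ T.Hnorm p (A f) ≤ C * T.Hnorm p f

lemma boundedOn_iff_exists_isOpBound {A : (T.V → ℂ) → (T.V → ℂ)} {Mem : (T.V → ℂ) → Prop} :
    T.BoundedOn A Mem p ↔ ∃ C, T.IsOpBound A Mem p C :=
  Iff.rfl

lemma opNorm_eq_sInf_isOpBound (A : (T.V → ℂ) → (T.V → ℂ)) (Mem : (T.V → ℂ) → Prop) :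
    T.opNorm A Mem p = sInf {C | T.IsOpBound A Mem p C} :=
  rfl

lemma shiftRatio_nonneg (n : ℕ) : 0 ≤ T.shiftRatio n := by
  unfold shiftRatio; positivity

lemma mem_levelFinset {n : ℕ} {v : T.V} : v ∈ T.levelFinset n ↔ T.level v = n := by
  simp [levelFinset]

lemma gamma_pos (n : ℕ) : 0 < T.gamma n :=
  Finset.card_pos.2 <| (T.nonempty_level n).imp fun _ => mem_levelFinset.2

lemma ne_root_of_level_eq_succ {v : T.V} {n : ℕ} (hv : T.level v = n + 1) : v ≠ T.root := by
  rintro rfl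
  rw [T.level_root] at hv
  omega

lemma sum_levelFinset_succ_comp_parent (n : ℕ) (g : T.V → ℝ) :
    ∑ w ∈ T.levelFinset (n + 1), g (T.parent w) =
      ∑ v ∈ T.levelFinset n, (T.numChildren v : ℝ) * g v := by
  have hmaps : ∀ w ∈ T.levelFinset (n + 1), T.parent w ∈ T.levelFinset n := fun w hw => by
    have hw := mem_levelFinset.1 hw
    have := T.level_parent w (ne_root_of_level_eq_succ hw)
    exact mem_levelFinset.2 (by omega)
  rw [← Finset.sum_fiberwise_of_maps_to hmaps]
  refine Finset.sum_congr rfl fun v hv => ?_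
  have hfiber : (T.levelFinset (n + 1)).filter (fun w => T.parent w = v) = T.childrenFinset v := by
    simp [childrenFinset, nChildrenFinset, mem_levelFinset.1 hv]
  rw [Finset.sum_congr rfl fun w hw => by rw [(Finset.mem_filter.1 hw).2], Finset.sum_const,
    hfiber, nsmul_eq_mul]
  rfl

lemma Mpp_nonneg (f : T.V → ℂ) (n : ℕ) : 0 ≤ T.Mpp p f n := by
  unfold Mpp
  have := fun v => Real.rpow_nonneg (norm_nonneg (f v)) p
  positivity

lemma Mp_nonneg (f : T.V → ℂ) (n : ℕ) : 0 ≤ T.Mp p f n :=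
  Real.rpow_nonneg (Mpp_nonneg f n) _

lemma Mpp_le_rpow_of_Mp_le (hp : 0 < p) {f : T.V → ℂ} {n : ℕ} {a : ℝ} (ha : 0 ≤ a)
    (h : T.Mp p f n ≤ a) : T.Mpp p f n ≤ a ^ p := by
  rwa [Mp, one_div, Real.rpow_inv_le_iff_of_pos (Mpp_nonneg f n) ha hp] at h

lemma Mp_le_Hnorm {f : T.V → ℂ} (hf : T.MemHp0 p f) (n : ℕ) : T.Mp p f n ≤ T.Hnorm p f :=
  le_ciSup hf.bddAbove_range n

lemma Mp_S_zero (hp : 0 < p) (f : T.V → ℂ) : T.Mp p (T.S f) 0 = 0 := by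
  have hlevel : T.levelFinset 0 = {T.root} := by
    ext w
    rw [mem_levelFinset, Finset.mem_singleton]
    exact ⟨T.root_of_level_zero w, fun h => h ▸ T.level_root⟩
  simp [Mp, Mpp, hlevel, S, Real.zero_rpow hp.ne', hp.ne']

lemma Mpp_S_succ (f : T.V → ℂ) (n : ℕ) :
    T.Mpp p (T.S f) (n + 1) =
      (1 / (T.gamma (n + 1) : ℝ)) * ∑ v ∈ T.levelFinset n, (T.numChildren v : ℝ) * ‖f v‖ ^ p := by
  rw [Mpp, ← sum_levelFinset_succ_comp_parent n fun v => ‖f v‖ ^ p]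
  congr 1
  refine Finset.sum_congr rfl fun w hw => ?_
  simp [S, ne_root_of_level_eq_succ (mem_levelFinset.1 hw)]

lemma Mpp_S_succ_le (f : T.V → ℂ) (n : ℕ) :
    T.Mpp p (T.S f) (n + 1) ≤ T.shiftRatio n * T.Mpp p f n := by
  have hγ := gamma_pos (T := T) n
  calc T.Mpp p (T.S f) (n + 1)
      ≤ (1 / (T.gamma (n + 1) : ℝ)) * ∑ v ∈ T.levelFinset n, (T.K 1 n : ℝ) * ‖f v‖ ^ p := by
        rw [Mpp_S_succ]
        gcongr with v hv
        exact_mod_cast Finset.le_sup (f := T.numNChildren 1) hv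
    _ = T.shiftRatio n * T.Mpp p f n := by
        rw [← Finset.mul_sum, Mpp, shiftRatio]
        field_simp

lemma Mp_S_succ_le (hp : 0 < p) {C : ℝ} (hC : 0 ≤ C) {n : ℕ} (hn : T.shiftRatio n ≤ C ^ p)
    (f : T.V → ℂ) : T.Mp p (T.S f) (n + 1) ≤ C * T.Mp p f n := by
  have hCp : 0 ≤ C ^ p := Real.rpow_nonneg hC p
  calc T.Mp p (T.S f) (n + 1) ≤ (C ^ p * T.Mpp p f n) ^ (1 / p) :=
        Real.rpow_le_rpow (Mpp_nonneg _ _)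
          ((Mpp_S_succ_le f n).trans (by gcongr; exact Mpp_nonneg f n)) (by positivity)
    _ = C * T.Mp p f n := by
        rw [Real.mul_rpow hCp (Mpp_nonneg f n), one_div, Real.rpow_rpow_inv hC hp.ne', Mp,
          one_div]

lemma isOpBound_S_of_shiftRatio_le (hp : 0 < p) {C : ℝ} (hC : 0 ≤ C)
    (hratio : ∀ n, T.shiftRatio n ≤ C ^ p) : T.IsOpBound T.S (T.MemHp0 p) p C := by
  refine ⟨hC, fun f hf => ⟨?_, ?_⟩⟩
  · unfold MemHp0 at hf ⊢
    rw [← Filter.tendsto_add_atTop_iff_nat 1]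
    refine squeeze_zero (fun n => Mp_nonneg _ _) (fun n => Mp_S_succ_le hp hC (hratio n) f) ?_
    simpa using hf.const_mul C
  · refine ciSup_le fun n => ?_
    cases n with
    | zero =>
      rw [Mp_S_zero hp f]
      exact mul_nonneg hC ((Mp_nonneg f 0).trans (Mp_le_Hnorm hf 0))
    | succ n => exact (Mp_S_succ_le hp hC (hratio n) f).trans (by gcongr; exact Mp_le_Hnorm hf n)

section Indicator

variable (v : T.V)

lemma sum_levelFinset_single_rpow (hp : 0 < p) (m : ℕ) (c : T.V → ℝ) :
    ∑ w ∈ T.levelFinset m, c w * ‖(Pi.single v 1 : T.V → ℂ) w‖ ^ p =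
      if T.level v = m then c v else 0 := by
  have hterm : ∀ w, c w * ‖(Pi.single v 1 : T.V → ℂ) w‖ ^ p = if w = v then c w else 0 := by
    intro w
    by_cases h : w = v <;> simp [h, Real.zero_rpow hp.ne']
  simp only [hterm, Finset.sum_ite_eq', mem_levelFinset]

lemma Mpp_single (hp : 0 < p) (m : ℕ) :
    T.Mpp p (Pi.single v 1) m = if T.level v = m then 1 / (T.gamma m : ℝ) else 0 := by
  have := sum_levelFinset_single_rpow v hp m 1
  simp only [Pi.one_apply, one_mul] at this
  rw [Mpp, this, mul_ite, mul_one, mul_zero]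

lemma memHp0_single (hp : 0 < p) : T.MemHp0 p (Pi.single v 1) := by
  refine tendsto_const_nhds.congr' ?_
  filter_upwards [Filter.eventually_gt_atTop (T.level v)] with m hm
  rw [Mp, Mpp_single v hp, if_neg hm.ne, Real.zero_rpow (by positivity)]

lemma Mp_single_le (hp : 0 < p) (m : ℕ) :
    T.Mp p (Pi.single v 1) m ≤ (1 / (T.gamma (T.level v) : ℝ)) ^ (1 / p) := by
  rw [Mp, Mpp_single v hp]
  split_ifs with h
  · rw [h]
  · rw [Real.zero_rpow (by positivity)]
    positivity

lemma Mpp_S_single (hp : 0 < p) :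
    T.Mpp p (T.S (Pi.single v 1)) (T.level v + 1) =
      (T.numChildren v : ℝ) / (T.gamma (T.level v + 1) : ℝ) := by
  rw [Mpp_S_succ, sum_levelFinset_single_rpow v hp _ fun u => (T.numChildren u : ℝ), if_pos rfl]
  ring

end Indicator

lemma shiftRatio_le_of_isOpBound (hp : 0 < p) {C : ℝ} (hC : T.IsOpBound T.S (T.MemHp0 p) p C)
    (n : ℕ) : T.shiftRatio n ≤ C ^ p := by
  obtain ⟨hC0, hbound⟩ := hC
  obtain ⟨v, hv, hmax⟩ := Finset.exists_mem_eq_sup (T.levelFinset n)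
    ((T.nonempty_level n).imp fun _ => mem_levelFinset.2) (T.numNChildren 1)
  rw [mem_levelFinset] at hv
  subst hv
  obtain ⟨hSf, hnorm⟩ := hbound _ (memHp0_single v hp)
  have hHnorm : T.Hnorm p (Pi.single v 1) ≤ (1 / (T.gamma (T.level v) : ℝ)) ^ (1 / p) :=
    ciSup_le (Mp_single_le v hp)
  have hγ : (0 : ℝ) < T.gamma (T.level v) := mod_cast gamma_pos _
  have hγ' : (0 : ℝ) < T.gamma (T.level v + 1) := mod_cast gamma_pos _
  have hMp : T.Mp p (T.S (Pi.single v 1)) (T.level v + 1) ≤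
      C * (1 / (T.gamma (T.level v) : ℝ)) ^ (1 / p) :=
    (Mp_le_Hnorm hSf _).trans (hnorm.trans (mul_le_mul_of_nonneg_left hHnorm hC0))
  have hMpp := Mpp_le_rpow_of_Mp_le hp (by positivity) hMp
  rw [Mpp_S_single v hp, Real.mul_rpow hC0 (by positivity), one_div p,
    Real.rpow_inv_rpow (by positivity) hp.ne'] at hMpp
  rw [shiftRatio, K, hmax, mul_div_right_comm]
  calc (T.numChildren v : ℝ) / T.gamma (T.level v + 1) * T.gamma (T.level v)
      ≤ C ^ p * (1 / (T.gamma (T.level v) : ℝ)) * T.gamma (T.level v) := by gcongr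
    _ = C ^ p := by field_simp

lemma isOpBound_S_iff (hp : 0 < p) {C : ℝ} :
    T.IsOpBound T.S (T.MemHp0 p) p C ↔ 0 ≤ C ∧ ∀ n, T.shiftRatio n ≤ C ^ p :=
  ⟨fun hC => ⟨hC.1, shiftRatio_le_of_isOpBound hp hC⟩,
    fun hC => isOpBound_S_of_shiftRatio_le hp hC.1 hC.2⟩

end HTree

/-- boundedness and norm of the forward shift on `H^p_0(T)`. -/
theorem forward_shift_bounded_Hp0 (T : HTree) (p : ℝ) (hp : 1 ≤ p) :
    (T.BoundedOn T.S (T.MemHp0 p) p ↔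
      BddAbove (Set.range fun n : ℕ =>
        (T.K 1 n : ℝ) * (T.gamma n : ℝ) / (T.gamma (n + 1) : ℝ))) ∧
    (T.BoundedOn T.S (T.MemHp0 p) p →
      T.opNorm T.S (T.MemHp0 p) p =
        (⨆ n : ℕ, (T.K 1 n : ℝ) * (T.gamma n : ℝ) / (T.gamma (n + 1) : ℝ)) ^ (1 / p)) := by
  have hp0 : 0 < p := by linarith
  have hbounded : T.BoundedOn T.S (T.MemHp0 p) p ↔ BddAbove (Set.range T.shiftRatio) := by
    simp_rw [HTree.boundedOn_iff_exists_isOpBound, HTree.isOpBound_S_iff hp0]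
    constructor
    · rintro ⟨C, -, hC⟩
      exact ⟨C ^ p, Set.forall_mem_range.2 hC⟩
    · exact fun hb => (isLeast_rpow_ciSup (fun n => HTree.shiftRatio_nonneg n) hb hp0).nonempty
  refine ⟨hbounded, fun h => ?_⟩
  simp_rw [HTree.opNorm_eq_sInf_isOpBound, HTree.isOpBound_S_iff hp0]
  exact (isLeast_rpow_ciSup (fun n => HTree.shiftRatio_nonneg n) (hbounded.1 h) hp0).csInf_eq
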